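/- Let A, B be real n×n matrices with B invertible and B⁻¹A = −2EQE + P, write 𝒢 := B⁻¹A, let ν ∈ ℝⁿ and u ∈ ℂⁿ, and set w := B⁻¹(ν + u) − 𝒢·π𝟙 ∈ ℂⁿ. Then for every z ∈ ℍⁿ the potential function S is holomorphic in a neighborhood of y(z), and its holomorphic gradient satisfies ∇S(y(z)) = 0 if and only if A·(Log z₁, …, Log zₙ)ᵀ + B·(Log z₁'', …, Log zₙ'')ᵀ = i(ν + u). -/

import Mathlib

open Matrix Real

/-- The dilogarithm `Li₂(z) = -∫₀¹ Log(1 - z t) / t dt`. -/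
noncomputable def Li2 (z : ℂ) : ℂ :=
  -∫ t in (0:ℝ)..(1:ℝ), Complex.log (1 - z * (t : ℂ)) / (t : ℂ)

/-- The sign `ε_k`: `1` for the first `nP` indices (positive tetrahedra),
`-1` for the remaining ones (negative tetrahedra). -/
def epsR (nP n : ℕ) (k : Fin n) : ℝ := if (k : ℕ) < nP then 1 else -1

/-- The potential function
`S(y) = i yᵀQy + Σ (-ε_k) y_k w_k + i Σ_{k ≤ n₊} Li₂(-e^{y_k}) - i Σ_{k > n₊} Li₂(-e^{y_k})`. -/
noncomputable def potential (nP nN : ℕ) (Q : Matrix (Fin (nP + nN)) (Fin (nP + nN)) ℝ)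
    (w : Fin (nP + nN) → ℂ) (y : Fin (nP + nN) → ℂ) : ℂ :=
  Complex.I * (y ⬝ᵥ (Q.map Complex.ofReal).mulVec y)
    + ∑ k, -(epsR nP (nP + nN) k : ℂ) * y k * w k
    + Complex.I * ∑ k ∈ Finset.univ.filter (fun k : Fin (nP + nN) => (k : ℕ) < nP),
        Li2 (-Complex.exp (y k))
    - Complex.I * ∑ k ∈ Finset.univ.filter (fun k : Fin (nP + nN) => ¬ (k : ℕ) < nP),
        Li2 (-Complex.exp (y k))

/-!
The holomorphic gradient of `S` is computed termwise. Its quadratic part is `i(Q + Qᵀ)y = 2iQy`,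
its linear part `-E w`, and `d/dy Li₂(-e^y) = -Log(1 + e^y)` by differentiating under the
integral sign. At `y = y(z)` one has `e^{y_k} = -z_k` for `ε_k = 1` and `e^{y_k} = -1/z_k` for
`ε_k = -1`, so `Log(1 + e^{y_k}) = Log z_k'' + P_kk (Log z_k - iπ)` (branches checked in the upper
half-plane). Substituting, the `π`-terms of `w` cancel those coming from `y` and
`∇S(y(z)) = -iE(𝒢 Log z + Log z'' - iB⁻¹(ν + u))`; since `E` and `B` are invertible, this vanishes
iff `A Log z + B Log z'' = i(ν + u)`.
-/

open Complex Set Metric MeasureTheory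

namespace Complex

lemma ne_zero_of_im_pos {z : ℂ} (hz : 0 < z.im) : z ≠ 0 := fun h => by simp [h] at hz

lemma one_sub_mul_ofReal_mem_slitPlane {x : ℂ} (hx : 1 - x ∈ slitPlane) {t : ℝ}
    (ht : t ∈ Icc (0 : ℝ) 1) : 1 - x * t ∈ slitPlane := by
  have h := starConvex_one_slitPlane.add_smul_mem (y := -x) (by rwa [← sub_eq_add_neg]) ht.1 ht.2
  rwa [real_smul, mul_neg, ← sub_eq_add_neg, mul_comm] at h

lemma hasDerivAt_log_one_sub_mul_ofReal {x : ℂ} {t : ℝ} (h : 1 - x * t ∈ slitPlane) :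
    HasDerivAt (fun s : ℝ => log (1 - x * s)) (-x / (1 - x * t)) t := by
  have h1 : HasDerivAt (fun s : ℂ => 1 - x * s) (-x) t := by
    simpa using ((hasDerivAt_id (t : ℂ)).const_mul x).const_sub 1
  simpa [div_eq_inv_mul, mul_comm] using (h1.clog h).comp_ofReal

/- The integrand extends continuously to `t = 0` as the difference quotient `dslope` of
`t ↦ Log(1 - x t)` at `0`. -/
lemma intervalIntegrable_log_one_sub_mul_div {x : ℂ} (hx : 1 - x ∈ slitPlane) :
    IntervalIntegrable (fun t : ℝ => log (1 - x * t) / t) volume 0 1 := by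
  set g : ℝ → ℂ := fun t => log (1 - x * t)
  have hg : ∀ t ∈ Icc (0 : ℝ) 1, HasDerivAt g (-x / (1 - x * t)) t := fun t ht =>
    hasDerivAt_log_one_sub_mul_ofReal (one_sub_mul_ofReal_mem_slitPlane hx ht)
  have hcont : ContinuousOn (dslope g 0) (Icc 0 1) := by
    intro t ht
    refine ContinuousAt.continuousWithinAt ?_
    rcases eq_or_ne t 0 with rfl | ht0
    · exact continuousAt_dslope_same.2 (hg 0 ht).differentiableAt
    · exact (continuousAt_dslope_of_ne ht0).2 (hg t ht).continuousAt
  refine (hcont.intervalIntegrable_of_Icc zero_le_one).congr ?_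
  intro t ht
  have ht0 : t ≠ 0 := (uIoc_of_le (zero_le_one' ℝ) ▸ ht).1.ne'
  simp [dslope_of_ne _ ht0, slope_def_module, g, div_eq_inv_mul]

lemma exists_ball_bound_inv_one_sub_mul {z : ℂ} (hz : 1 - z ∈ slitPlane) :
    ∃ ε > 0, ∃ C, ∀ x ∈ ball z ε,
      1 - x ∈ slitPlane ∧ ∀ t ∈ Icc (0 : ℝ) 1, ‖(1 - x * t)⁻¹‖ ≤ C := by
  have hopen : IsOpen {x : ℂ | 1 - x ∈ slitPlane} := isOpen_slitPlane.preimage (by fun_prop)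
  obtain ⟨ε, hε, hsub⟩ := nhds_basis_closedBall.mem_iff.1 (hopen.mem_nhds hz)
  obtain ⟨C, hC⟩ := ((isCompact_closedBall z ε).prod isCompact_Icc).exists_bound_of_continuousOn
    (f := fun p : ℂ × ℝ => (1 - p.1 * p.2)⁻¹) <| ContinuousOn.inv₀ (by fun_prop) fun p hp =>
      slitPlane_ne_zero (one_sub_mul_ofReal_mem_slitPlane (hsub hp.1) hp.2)
  exact ⟨ε, hε, C, fun x hx => ⟨hsub (ball_subset_closedBall hx),
    fun t ht => hC (x, t) ⟨ball_subset_closedBall hx, ht⟩⟩⟩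

lemma log_one_sub_of_im_pos {z : ℂ} (hz : 0 < z.im) :
    log (1 - z) = log ((z - 1) / z) + (log z - I * π) := by
  have hw : 0 < (z - 1).im := by simpa using hz
  have hneg : log (1 - z) = log (z - 1) - I * π := by
    rw [show 1 - z = -(z - 1) by ring, log, log, norm_neg, arg_neg_eq_arg_sub_pi_of_im_pos hw]
    push_cast
    ring
  have harg : arg z ≠ π := (arg_lt_pi_iff.2 (Or.inr hz.ne')).ne
  have hdiv : log ((z - 1) / z) = log (z - 1) - log z := by
    rw [div_eq_mul_inv, log_mul (ne_zero_of_im_pos hw) (inv_ne_zero (ne_zero_of_im_pos hz)),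
      log_inv _ harg, ← sub_eq_add_neg]
    rw [arg_inv, if_neg harg]
    constructor <;> linarith [arg_nonneg_iff.2 hw.le, arg_le_pi (z - 1), arg_nonneg_iff.2 hz.le,
      arg_lt_pi_iff.2 (Or.inr hz.ne')]
  rw [hneg, hdiv]
  ring

lemma im_sub_one_div_pos {z : ℂ} (hz : 0 < z.im) : 0 < ((z - 1) / z).im := by
  have hz0 := ne_zero_of_im_pos hz
  rw [sub_div, div_self hz0, one_div, sub_im, one_im, inv_im, zero_sub, neg_div, neg_neg]
  exact div_pos hz (normSq_pos.2 hz0)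

lemma exp_log_sub_I_mul_pi {z : ℂ} (hz : z ≠ 0) : cexp (log z - I * π) = -z := by
  rw [exp_sub, exp_log hz, mul_comm, exp_pi_mul_I, div_neg, div_one]

end Complex

theorem hasDerivAt_Li2 {z : ℂ} (hz0 : z ≠ 0) (hz : 1 - z ∈ slitPlane) :
    HasDerivAt Li2 (-log (1 - z) / z) z := by
  obtain ⟨ε, hε, C, hball⟩ := exists_ball_bound_inv_one_sub_mul hz
  have hIcc : ∀ {t : ℝ}, t ∈ uIoc (0 : ℝ) 1 → t ∈ Icc (0 : ℝ) 1 := fun ht =>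
    Ioc_subset_Icc_self (uIoc_of_le (zero_le_one' ℝ) ▸ ht)
  have hderiv := intervalIntegral.hasDerivAt_integral_of_dominated_loc_of_deriv_le
    (F := fun (x : ℂ) (t : ℝ) => log (1 - x * t) / t)
    (F' := fun (x : ℂ) (t : ℝ) => -(1 - x * t)⁻¹)
    (bound := fun _ => C) (ball_mem_nhds z hε) ?_ (intervalIntegrable_log_one_sub_mul_div hz)
    ?_ ?_ intervalIntegrable_const ?_
  · have hlog := log_inv_eq_integral hz
    rw [log_inv _ (slitPlane_arg_ne_pi hz)] at hlog
    simp only [real_smul, mul_comm _ z] at hlog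
    have hint : -∫ t in (0 : ℝ)..1, -(1 - z * t)⁻¹ = -log (1 - z) / z := by
      rw [intervalIntegral.integral_neg, neg_neg, hlog, mul_div_cancel_left₀ _ hz0]
    exact hint ▸ hderiv.2.neg
  · filter_upwards [ball_mem_nhds z hε] with x hx
    exact (intervalIntegrable_log_one_sub_mul_div (hball x hx).1).def'.aestronglyMeasurable
  · refine ContinuousOn.aestronglyMeasurable ?_ measurableSet_uIoc
    exact (ContinuousOn.inv₀ (by fun_prop) fun t ht => slitPlane_ne_zero
      (one_sub_mul_ofReal_mem_slitPlane hz (hIcc ht))).neg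
  · exact ae_of_all _ fun t ht x hx => by
      simpa only [norm_neg] using (hball x hx).2 t (hIcc ht)
  · refine ae_of_all _ fun t ht x hx => ?_
    have ht0 : (t : ℂ) ≠ 0 := ofReal_ne_zero.2 (uIoc_of_le (zero_le_one' ℝ) ▸ ht).1.ne'
    have hx := one_sub_mul_ofReal_mem_slitPlane (hball x hx).1 (hIcc ht)
    have hlin : HasDerivAt (fun x : ℂ => 1 - x * t) (-t) x := by
      simpa using ((hasDerivAt_id x).mul_const (t : ℂ)).const_sub 1
    refine ((hlin.clog hx).div_const (t : ℂ)).congr_deriv ?_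
    field_simp

theorem hasDerivAt_Li2_neg_exp {y : ℂ} (hy : 1 + cexp y ∈ slitPlane) :
    HasDerivAt (fun v => Li2 (-cexp v)) (-log (1 + cexp y)) y := by
  have h := (hasDerivAt_Li2 (neg_ne_zero.2 (exp_ne_zero y)) (by rwa [sub_neg_eq_add])).comp y
    (hasDerivAt_exp y).neg
  refine h.congr_deriv ?_
  field_simp [exp_ne_zero y]
  rw [sub_neg_eq_add]

section Gradient

variable {𝕜 ι : Type*} [NontriviallyNormedField 𝕜] [Fintype ι]

open ContinuousLinearMap

lemma sum_smul_proj_apply_single [DecidableEq ι] (c : ι → 𝕜) (j : ι) :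
    (∑ k, c k • proj k : (ι → 𝕜) →L[𝕜] 𝕜) (Pi.single j 1) = c j := by
  simp [Pi.single_apply]

lemma hasFDerivAt_dotProduct_mulVec_self (M : Matrix ι ι 𝕜) (y : ι → 𝕜) :
    HasFDerivAt (fun v => v ⬝ᵥ M *ᵥ v)
      (∑ k, ((M + Mᵀ) *ᵥ y) k • (proj k : (ι → 𝕜) →L[𝕜] 𝕜)) y := by
  have h : HasFDerivAt (fun v : ι → 𝕜 => ∑ i, ∑ j, v i * (M i j * v j))
      (∑ i, ∑ j, (y i • M i j • (proj j : (ι → 𝕜) →L[𝕜] 𝕜) + (M i j * y j) • proj i)) y :=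
    HasFDerivAt.fun_sum fun i _ => HasFDerivAt.fun_sum fun j _ =>
      (hasFDerivAt_apply i y).mul ((hasFDerivAt_apply j y).const_mul (M i j))
  refine (h.congr_fderiv ?_).congr_of_eventuallyEq (Filter.Eventually.of_forall fun v => ?_)
  · ext h
    simp only [Finset.sum_add_distrib, _root_.add_apply, _root_.sum_apply, _root_.smul_apply,
      proj_apply, smul_eq_mul, mulVec, dotProduct, Matrix.add_apply, transpose_apply, add_mul,
      Finset.sum_mul]
    rw [add_comm, Finset.sum_comm (f := fun i j => M j i * y j * h i)]
    congr 1
    exact Finset.sum_congr rfl fun _ _ => Finset.sum_congr rfl fun _ _ => by ring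
  · simp [dotProduct, mulVec, Finset.mul_sum]

lemma hasFDerivAt_sum_apply {f : ι → 𝕜 → 𝕜} {f' : ι → 𝕜} {y : ι → 𝕜}
    (hf : ∀ k, HasDerivAt (f k) (f' k) (y k)) :
    HasFDerivAt (fun v => ∑ k, f k (v k)) (∑ k, f' k • (proj k : (ι → 𝕜) →L[𝕜] 𝕜)) y :=
  HasFDerivAt.fun_sum fun k _ => (hf k).comp_hasFDerivAt y (hasFDerivAt_apply k y)

end Gradient

lemma inv_mul_mulVec_add_eq_iff {R n : Type*} [CommRing R] [Fintype n] [DecidableEq n]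
    {A B B' : Matrix n n R} (h : B * B' = 1) (h' : B' * B = 1) (x x' v : n → R) :
    (B' * A) *ᵥ x + x' = B' *ᵥ v ↔ A *ᵥ x + B *ᵥ x' = v := by
  constructor
  · intro hx
    simpa [mulVec_add, mulVec_mulVec, ← Matrix.mul_assoc, h] using congrArg (B *ᵥ ·) hx
  · rintro rfl
    simp [mulVec_add, mulVec_mulVec, h']

lemma map_ofReal_inv_mul_mulVec_add_eq_iff {n : Type*} [Fintype n] [DecidableEq n]
    {A B : Matrix n n ℝ} (hB : IsUnit B.det) (x x' v : n → ℂ) :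
    (B⁻¹ * A).map ofReal *ᵥ x + x' = B⁻¹.map ofReal *ᵥ v
      ↔ A.map ofReal *ᵥ x + B.map ofReal *ᵥ x' = v := by
  have hmul : ∀ M N : Matrix n n ℝ, (M * N).map ofReal = M.map ofReal * N.map ofReal :=
    fun _ _ => Matrix.map_mul (f := ofRealHom)
  rw [hmul]
  refine inv_mul_mulVec_add_eq_iff ?_ ?_ x x' v <;>
    rw [← hmul, ← Matrix.map_one _ ofReal_zero ofReal_one]
  exacts [by rw [mul_nonsing_inv B hB], by rw [nonsing_inv_mul B hB]]

section Shapes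

variable {nP n : ℕ} (k : Fin n) {z : ℂ}

lemma one_add_exp_epsR_mul (hz : z ≠ 0) :
    1 + cexp (epsR nP n k * (log z - I * π)) = if (k : ℕ) < nP then 1 - z else (z - 1) / z := by
  by_cases hk : (k : ℕ) < nP
  · simp only [epsR, hk, if_true, ofReal_one, one_mul, exp_log_sub_I_mul_pi hz]
    ring
  · simp only [epsR, hk, if_false, ofReal_neg, ofReal_one, neg_one_mul, Complex.exp_neg,
      exp_log_sub_I_mul_pi hz]
    field_simp
    ring

lemma one_add_exp_epsR_mul_mem_slitPlane (hz : 0 < z.im) :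
    1 + cexp (epsR nP n k * (log z - I * π)) ∈ slitPlane := by
  rw [one_add_exp_epsR_mul k (ne_zero_of_im_pos hz), mem_slitPlane_iff]
  split_ifs
  · exact Or.inr (by simpa using hz.ne')
  · exact Or.inr (im_sub_one_div_pos hz).ne'

lemma log_one_add_exp_epsR_mul (hz : 0 < z.im) :
    log (1 + cexp (epsR nP n k * (log z - I * π)))
      = log ((z - 1) / z) + max (epsR nP n k) 0 * (log z - I * π) := by
  rw [one_add_exp_epsR_mul k (ne_zero_of_im_pos hz)]
  by_cases hk : (k : ℕ) < nP
  · simp [epsR, hk, log_one_sub_of_im_pos hz]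
  · simp [epsR, hk]

end Shapes

section Potential

variable {nP nN : ℕ} (Q : Matrix (Fin (nP + nN)) (Fin (nP + nN)) ℝ) (w : Fin (nP + nN) → ℂ)

/- The matrix `𝒢 = -2EQE + P`. -/
def potentialMatrix : Matrix (Fin (nP + nN)) (Fin (nP + nN)) ℝ :=
  (-2 : ℝ) • (diagonal (epsR nP (nP + nN)) * Q * diagonal (epsR nP (nP + nN)))
    + diagonal (fun k => max (epsR nP (nP + nN) k) 0)

lemma potentialMatrix_mulVec_apply (f : Fin (nP + nN) → ℂ) (k : Fin (nP + nN)) :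
    ((potentialMatrix Q).map ofReal *ᵥ f) k
      = -2 * epsR nP (nP + nN) k * ∑ l, Q k l * epsR nP (nP + nN) l * f l
        + max (epsR nP (nP + nN) k) 0 * f k := by
  simp only [mulVec, dotProduct, potentialMatrix, neg_smul, map_apply, Matrix.add_apply,
    Matrix.neg_apply, Matrix.smul_apply, mul_diagonal, diagonal_mul, smul_eq_mul, diagonal_apply,
    ofReal_add, ofReal_neg, ofReal_mul, ofReal_ofNat, apply_ite ofReal, ofReal_zero, add_mul,
    neg_mul, ite_mul, zero_mul, Finset.sum_add_distrib, Finset.sum_neg_distrib, Finset.sum_ite_eq,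
    Finset.mem_univ, if_true, Finset.mul_sum, add_left_inj, neg_inj]
  exact Finset.sum_congr rfl fun _ _ => by ring

lemma potential_eq_add_sum :
    potential nP nN Q w = fun v => I * (v ⬝ᵥ Q.map ofReal *ᵥ v) +
      ∑ k, (-(epsR nP (nP + nN) k : ℂ) * v k * w k
        + I * epsR nP (nP + nN) k * Li2 (-cexp (v k))) := by
  ext v
  simp only [potential, Finset.sum_filter, Finset.mul_sum, Finset.sum_add_distrib]
  rw [add_assoc, add_sub_assoc, add_sub_assoc, ← Finset.sum_sub_distrib]
  congr 2
  refine Finset.sum_congr rfl fun k _ => ?_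
  by_cases hk : (k : ℕ) < nP <;> simp [epsR, hk]

noncomputable def potentialGradient (y : Fin (nP + nN) → ℂ) (k : Fin (nP + nN)) : ℂ :=
  I * ((Q.map ofReal + (Q.map ofReal)ᵀ) *ᵥ y) k - epsR nP (nP + nN) k * w k
    - I * epsR nP (nP + nN) k * log (1 + cexp (y k))

theorem hasFDerivAt_potential {y : Fin (nP + nN) → ℂ} (hy : ∀ k, 1 + cexp (y k) ∈ slitPlane) :
    HasFDerivAt (potential nP nN Q w) (∑ k, potentialGradient Q w y k •
        (ContinuousLinearMap.proj k : (Fin (nP + nN) → ℂ) →L[ℂ] ℂ)) y := by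
  have hsep := hasFDerivAt_sum_apply (y := y) fun k =>
    (((hasDerivAt_id (y k)).const_mul (-(epsR nP (nP + nN) k : ℂ))).mul_const (w k)).add
      ((hasDerivAt_Li2_neg_exp (hy k)).const_mul (I * epsR nP (nP + nN) k))
  rw [potential_eq_add_sum]
  refine (((hasFDerivAt_dotProduct_mulVec_self _ y).const_mul I).add hsep).congr_fderiv ?_
  simp only [Finset.smul_sum, smul_smul, ← Finset.sum_add_distrib, ← add_smul]
  refine Finset.sum_congr rfl fun k _ => congrArg (· • _) ?_
  simp only [potentialGradient]
  ring

lemma fderiv_potential_apply_single {y : Fin (nP + nN) → ℂ}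
    (hy : ∀ k, 1 + cexp (y k) ∈ slitPlane) (k : Fin (nP + nN)) :
    fderiv ℂ (potential nP nN Q w) y (Pi.single k 1) = potentialGradient Q w y k := by
  rw [(hasFDerivAt_potential Q w hy).fderiv, sum_smul_proj_apply_single]

lemma potentialGradient_eq_of_shapes (hQ : Q.IsSymm) (c : Fin (nP + nN) → ℂ)
    {z : Fin (nP + nN) → ℂ} (hz : ∀ k, 0 < (z k).im) (k : Fin (nP + nN)) :
    potentialGradient Q (c - (potentialMatrix Q).map ofReal *ᵥ fun _ => (π : ℂ))
        (fun j => epsR nP (nP + nN) j * (log (z j) - I * π)) k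
      = -I * epsR nP (nP + nN) k * (((potentialMatrix Q).map ofReal *ᵥ fun j => log (z j)) k
          + log ((z k - 1) / z k) - I * c k) := by
  have hsymm : (Q.map ofReal)ᵀ = Q.map ofReal := by rw [← transpose_map, hQ.eq]
  have hQy : ((Q.map ofReal + Q.map ofReal) *ᵥ
        fun j => epsR nP (nP + nN) j * (log (z j) - I * π)) k
      = 2 * ∑ l, (Q k l : ℂ) * epsR nP (nP + nN) l * log (z l)
        - 2 * I * π * ∑ l, (Q k l : ℂ) * epsR nP (nP + nN) l := by
    simp only [mulVec, dotProduct, Matrix.add_apply, map_apply, Finset.mul_sum,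
      ← Finset.sum_sub_distrib]
    exact Finset.sum_congr rfl fun _ _ => by ring
  simp only [potentialGradient, hsymm, hQy, Pi.sub_apply, potentialMatrix_mulVec_apply,
    log_one_add_exp_epsR_mul k (hz k), ← Finset.sum_mul]
  by_cases hk : (k : ℕ) < nP
  · have hε : epsR nP (nP + nN) k = 1 := if_pos hk
    simp only [hε, max_eq_left zero_le_one, ofReal_one]
    linear_combination (π - 2 * π * (∑ l, (Q k l : ℂ) * epsR nP (nP + nN) l) - c k) * I_sq
  · have hε : epsR nP (nP + nN) k = -1 := if_neg hk
    simp only [hε, max_eq_right (neg_nonpos.2 zero_le_one), ofReal_neg, ofReal_one, ofReal_zero]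
    linear_combination (c k - 2 * π * (∑ l, (Q k l : ℂ) * epsR nP (nP + nN) l)) * I_sq

end Potential

theorem stmt_1 (nP nN : ℕ)
    (Q A B : Matrix (Fin (nP + nN)) (Fin (nP + nN)) ℝ) (hQ : Q.IsSymm)
    (hB : IsUnit B.det)
    (hBA : B⁻¹ * A
      = (-2 : ℝ) • (Matrix.diagonal (epsR nP (nP + nN)) * Q *
          Matrix.diagonal (epsR nP (nP + nN)))
        + Matrix.diagonal (fun k => max (epsR nP (nP + nN) k) 0))
    (ν : Fin (nP + nN) → ℝ) (u : Fin (nP + nN) → ℂ)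
    (w : Fin (nP + nN) → ℂ)
    (hw : w = ((B⁻¹).map Complex.ofReal).mulVec (fun k => (ν k : ℂ) + u k)
      - (((B⁻¹ * A).map Complex.ofReal)).mulVec (fun _ => (π : ℂ)))
    (z : Fin (nP + nN) → ℂ) (hz : ∀ k, 0 < (z k).im)
    (y : Fin (nP + nN) → ℂ)
    (hy : ∀ k, y k = (epsR nP (nP + nN) k : ℂ) * (Complex.log (z k) - Complex.I * (π : ℂ))) :
    (∃ U : Set (Fin (nP + nN) → ℂ), IsOpen U ∧ y ∈ U ∧
        DifferentiableOn ℂ (potential nP nN Q w) U) ∧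
    ((∀ k, fderiv ℂ (potential nP nN Q w) y (Pi.single k 1) = 0) ↔
      (A.map Complex.ofReal).mulVec (fun k => Complex.log (z k))
          + (B.map Complex.ofReal).mulVec (fun k => Complex.log ((z k - 1) / z k))
        = fun k => Complex.I * ((ν k : ℂ) + u k)) := by
  have hG : B⁻¹ * A = potentialMatrix Q := hBA
  obtain rfl : y = fun k => (epsR nP (nP + nN) k : ℂ) * (log (z k) - I * π) := funext hy
  have hslit : ∀ k, 1 + cexp (epsR nP (nP + nN) k * (log (z k) - I * π)) ∈ slitPlane :=
    fun k => one_add_exp_epsR_mul_mem_slitPlane k (hz k)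
  refine ⟨⟨⋂ k, {v | 1 + cexp (v k) ∈ slitPlane},
    isOpen_iInter_of_finite fun k => isOpen_slitPlane.preimage (by fun_prop), mem_iInter.2 hslit,
    fun v hv => ?_⟩, ?_⟩
  · exact (hasFDerivAt_potential Q w fun k => mem_iInter.1 hv k).differentiableAt
      |>.differentiableWithinAt
  rw [hG] at hw
  subst hw
  have hε : ∀ k, -I * (epsR nP (nP + nN) k : ℂ) ≠ 0 := fun k =>
    mul_ne_zero (neg_ne_zero.2 I_ne_zero) (by unfold epsR; split_ifs <;> norm_num)
  have hI : (fun k => I * ((ν k : ℂ) + u k)) = I • fun k => (ν k : ℂ) + u k := rfl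
  simp only [fderiv_potential_apply_single _ _ hslit, potentialGradient_eq_of_shapes Q hQ _ hz,
    mul_eq_zero, hε, false_or]
  rw [← hG, ← map_ofReal_inv_mul_mulVec_add_eq_iff hB, hI, mulVec_smul, funext_iff]
  exact forall_congr' fun k => sub_eq_zero
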